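/- arXiv:0904.3137 — 3 statements merged into one kernel-verified Lean document; each statement's English description precedes it below -/
import Mathlib

section
/- In a closed category C (in the sense with axiom CC5, i.e. γ bijective), one has j_1 = i_1 : 1 → C(1,1). -/
open CategoryTheory Opposite

universe v u

/-- The data of a closed category in the sense of Eilenberg–Kelly / Street / Laplaza:
an internal hom functor, a unit object, and the transformations `i`, `j`, `L`. -/
structure ClosedStruct (C : Type u) [Category.{v} C] where
  ihom : Cᵒᵖ × C ⥤ C
  unit : C
  i : ∀ X : C, X ≅ ihom.obj (op unit, X)
  j : ∀ X : C, unit ⟶ ihom.obj (op X, X)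
  L : ∀ X Y Z : C,
    ihom.obj (op Y, Z) ⟶ ihom.obj (op (ihom.obj (op X, Y)), ihom.obj (op X, Z))

namespace ClosedStruct

variable {C : Type u} [Category.{v} C] (S : ClosedStruct C)

/-- Internal hom object. -/
def h (X Y : C) : C := S.ihom.obj (op X, Y)

/-- Covariant action `C(1,g)` of the internal hom functor. -/
def mapR (X : C) {Y Z : C} (g : Y ⟶ Z) : S.h X Y ⟶ S.h X Z :=
  S.ihom.map (𝟙 (op X), g)

/-- Contravariant action `C(f,1)` of the internal hom functor. -/
def mapL {X Y : C} (f : X ⟶ Y) (Z : C) : S.h Y Z ⟶ S.h X Z :=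
  S.ihom.map (f.op, 𝟙 Z)

/-- The map `γ : C(X,Y) → C(1, C(X,Y))`, `f ↦ j_X ≫ C(1,f)`. -/
def gamma {X Y : C} (f : X ⟶ Y) : S.unit ⟶ S.h X Y := S.j X ≫ S.mapR X f

end ClosedStruct

/-- The axioms making a `ClosedStruct` into a closed category:
naturality/dinaturality of `i`, `j`, `L` and the axioms CC1–CC5
(CC5 : `γ` is a bijection). -/
structure IsClosedCat {C : Type u} [Category.{v} C] (S : ClosedStruct C) : Prop where
  i_nat : ∀ {X Y : C} (f : X ⟶ Y),
    f ≫ (S.i Y).hom = (S.i X).hom ≫ S.mapR S.unit f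
  j_dinat : ∀ {X Y : C} (f : X ⟶ Y),
    S.j X ≫ S.mapR X f = S.j Y ≫ S.mapL f Y
  L_nat : ∀ (X : C) {Y Y' Z Z' : C} (f : Y' ⟶ Y) (g : Z ⟶ Z'),
    S.ihom.map (f.op, g) ≫ S.L X Y' Z'
      = S.L X Y Z ≫ S.ihom.map (((S.mapR X f).op, S.mapR X g) :
          (op (S.h X Y), S.h X Z) ⟶ (op (S.h X Y'), S.h X Z'))
  L_dinat : ∀ {X X' : C} (f : X ⟶ X') (Y Z : C),
    S.L X Y Z ≫ S.mapL (S.mapL f Y) (S.h X Z)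
      = S.L X' Y Z ≫ S.mapR (S.h X' Y) (S.mapL f Z)
  cc1 : ∀ X Y : C, S.j Y ≫ S.L X Y Y = S.j (S.h X Y)
  cc2 : ∀ X Y : C, S.L X X Y ≫ S.mapL (S.j X) (S.h X Y) = (S.i (S.h X Y)).hom
  cc3 : ∀ X Y U V : C,
    S.L Y U V ≫ S.mapR (S.h Y U) (S.L X Y V)
      = S.L X U V ≫ S.L (S.h X Y) (S.h X U) (S.h X V)
          ≫ S.mapL (S.L X Y U) (S.h (S.h X Y) (S.h X V))
  cc4 : ∀ Y Z : C,
    S.L S.unit Y Z ≫ S.mapL (S.i Y).hom (S.h S.unit Z) = S.mapR Y (S.i Z).hom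
  cc5 : ∀ X Y : C, Function.Bijective (fun f : X ⟶ Y => S.gamma f)

/-! Since `γ` is injective it suffices to show that `j_1` and `i_1` have the same image
`j_1 ≫ i_{C(1,1)}` under `γ`. For `j_1` this is the case `X = 1` of `γ(j_X) = j_X ≫ i_{C(X,X)}`,
which follows from dinaturality of `j` at `j_X`, then CC1 and CC2. For `i_1` it is naturality
of `i` at the isomorphism `i_1` itself, which forces `C(1, i_1) = i_{C(1,1)}`. -/

namespace ClosedStruct

variable {C : Type u} [Category.{v} C] {S : ClosedStruct C}

theorem gamma_j (hS : IsClosedCat S) (X : C) :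
    S.gamma (S.j X) = S.j X ≫ (S.i (S.h X X)).hom :=
  (hS.j_dinat (S.j X)).trans <|
    (congrArg (· ≫ S.mapL (S.j X) (S.h X X)) (hS.cc1 X X).symm).trans <|
      (Category.assoc _ _ _).trans (congrArg (S.j X ≫ ·) (hS.cc2 X X))

theorem mapR_unit_i_hom (hS : IsClosedCat S) (X : C) :
    S.mapR S.unit (S.i X).hom = (S.i (S.h S.unit X)).hom :=
  (cancel_epi (S.i X).hom).1 (hS.i_nat (S.i X).hom).symm

end ClosedStruct

/-- In a closed category (with axiom CC5, i.e. `γ` bijective),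
`j_1 = i_1 : 1 ⟶ C(1,1)`. -/
theorem j_unit_eq_i_unit {C : Type u} [Category.{v} C]
    (S : ClosedStruct C) (hS : IsClosedCat S) :
    S.j S.unit = (S.i S.unit).hom :=
  (hS.cc5 S.unit (S.h S.unit S.unit)).1 <|
    (ClosedStruct.gamma_j hS S.unit).trans
      (congrArg (S.j S.unit ≫ ·) (ClosedStruct.mapR_unit_i_hom hS S.unit).symm)
end

section
/- In a closed multicategory C, for morphisms f : W → X and g : Y → Z, the interchange law C̲(f;Y) · C̲(W;g) = C̲(X;g) · C̲(f;Z) holds as morphisms C̲(X;Y) → C̲(W;Z). Consequently there is a functor C̲(-;-) : C^op × C → C on the underlying category of C sending (X,Y) to C̲(X;Y). -/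
universe u v

/-- A family of multimorphisms `f_i : Xss_i → Ys_i` (with matching lengths),
used to express simultaneous composition in a multicategory. -/
inductive HomFam (Obj : Type u) (Hom : List Obj → Obj → Type v) :
    List (List Obj) → List Obj → Type (max u v)
  | nil : HomFam Obj Hom [] []
  | cons {Xs Y Xss Ys} : Hom Xs Y → HomFam Obj Hom Xss Ys →
      HomFam Obj Hom (Xs :: Xss) (Y :: Ys)

/-- A family of families of multimorphisms. -/
inductive FamFam (Obj : Type u) (Hom : List Obj → Obj → Type v) :
    List (List (List Obj)) → List (List Obj) → Type (max u v)
  | nil : FamFam Obj Hom [] []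
  | cons {Xss Ys Xsss Yss} : HomFam Obj Hom Xss Ys → FamFam Obj Hom Xsss Yss →
      FamFam Obj Hom (Xss :: Xsss) (Ys :: Yss)

variable {Obj : Type u} {Hom : List Obj → Obj → Type v}

/-- The family of identities on a list of objects. -/
def idFam (ident : ∀ X, Hom [X] X) : ∀ Ys : List Obj,
    HomFam Obj Hom (Ys.map fun y => [y]) Ys
  | [] => .nil
  | y :: ys => .cons (ident y) (idFam ident ys)

/-- Concatenation of families. -/
def appendFam : ∀ {A B C D}, HomFam Obj Hom A B → HomFam Obj Hom C D →
    HomFam Obj Hom (A ++ C) (B ++ D)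
  | _, _, _, _, .nil, t => t
  | _, _, _, _, .cons f fs, t => .cons f (appendFam fs t)

/-- Flattening a family of families. -/
def flattenFam : ∀ {Xsss Yss}, FamFam Obj Hom Xsss Yss →
    HomFam Obj Hom Xsss.flatten Yss.flatten
  | _, _, .nil => .nil
  | _, _, .cons fs fss => appendFam fs (flattenFam fss)

/-- Componentwise composition of a family of families with a family. -/
def zipComp
    (comp : ∀ {Xss Ys Z}, HomFam Obj Hom Xss Ys → Hom Ys Z → Hom Xss.flatten Z) :
    ∀ {Xsss Yss Zs}, FamFam Obj Hom Xsss Yss → HomFam Obj Hom Yss Zs →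
      HomFam Obj Hom (Xsss.map List.flatten) Zs
  | _, _, _, .nil, .nil => .nil
  | _, _, _, .cons fs fss, .cons g gs => .cons (comp fs g) (zipComp comp fss gs)

/-- A multicategory: objects, multimorphisms `X₁,…,Xₙ → Y`, identities and an
associative and unital simultaneous composition `(f₁,…,fₙ) · g`. -/
structure Multicategory : Type (max (u + 1) (v + 1)) where
  Obj : Type u
  Hom : List Obj → Obj → Type v
  ident : ∀ X : Obj, Hom [X] X
  comp : ∀ {Xss : List (List Obj)} {Ys : List Obj} {Z : Obj},
    HomFam Obj Hom Xss Ys → Hom Ys Z → Hom Xss.flatten Z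
  id_comp : ∀ {Ys Z} (g : Hom Ys Z), HEq (comp (idFam ident Ys) g) g
  comp_id : ∀ {Xs Y} (f : Hom Xs Y), HEq (comp (.cons f .nil) (ident Y)) f
  assoc : ∀ {Xsss Yss Zs Z} (fss : FamFam Obj Hom Xsss Yss)
    (gs : HomFam Obj Hom Yss Zs) (h : Hom Zs Z),
    HEq (comp (zipComp (fun fs g => comp fs g) fss gs) h)
        (comp (flattenFam fss) (comp gs h))

namespace Multicategory

variable (M : Multicategory.{u, v})

theorem map_singleton_flatten (l : List M.Obj) :
    (l.map fun x => [x]).flatten = l := by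
  induction l <;> simp_all

theorem sflat (Xs Ys : List M.Obj) :
    ((Xs.map fun x => [x]) ++ [Ys]).flatten = Xs ++ Ys := by
  induction Xs <;> simp_all

theorem sflat2 (Xs Γ : List M.Obj) :
    (Xs :: (Γ.map fun x => [x])).flatten = Xs ++ Γ := by
  simp [List.flatten_cons, map_singleton_flatten]

/-- `(1,…,1,f) · g` : plugging `f` into the last argument of `g`. -/
def plug {Xs Ys : List M.Obj} {H Z : M.Obj} (f : M.Hom Ys H)
    (g : M.Hom (Xs ++ [H]) Z) : M.Hom (Xs ++ Ys) Z :=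
  cast (congrArg (M.Hom · Z) (M.sflat Xs Ys))
    (M.comp (appendFam (idFam M.ident Xs) (.cons f .nil)) g)

/-- `(f,1,…,1) · g` : plugging `f` into the first argument of `g`. -/
def plugFirst {Xs Γ : List M.Obj} {Y Z : M.Obj} (f : M.Hom Xs Y)
    (g : M.Hom (Y :: Γ) Z) : M.Hom (Xs ++ Γ) Z :=
  cast (congrArg (M.Hom · Z) (M.sflat2 Xs Γ))
    (M.comp (.cons f (idFam M.ident Γ)) g)

/-- `(f) · h` : composing a multimorphism with a unary morphism. -/
def postcomp {Γ : List M.Obj} {Y Z : M.Obj} (f : M.Hom Γ Y) (h : M.Hom [Y] Z) :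
    M.Hom Γ Z :=
  cast (congrArg (M.Hom · Z) (by simp : ([Γ].flatten : List M.Obj) = Γ))
    (M.comp (.cons f .nil) h)

/-- Composition in the underlying category. -/
def comp1 {X Y Z : M.Obj} (f : M.Hom [X] Y) (g : M.Hom [Y] Z) : M.Hom [X] Z :=
  M.postcomp f g

/-- `(a, b) · g` : binary simultaneous composition. -/
def pair {As Bs : List M.Obj} {A' B' Cc : M.Obj} (a : M.Hom As A') (b : M.Hom Bs B')
    (g : M.Hom [A', B'] Cc) : M.Hom (As ++ Bs) Cc :=
  cast (congrArg (M.Hom · Cc) (by simp : ([As, Bs].flatten : List M.Obj) = As ++ Bs))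
    (M.comp (.cons a (.cons b .nil)) g)

/-- `(f₁,…,fₘ,1) · g` for a family of unary morphisms `fᵢ`. -/
def sideComp {As Bs : List M.Obj} (fs : HomFam M.Obj M.Hom (As.map fun a => [a]) Bs)
    {H Z : M.Obj} (g : M.Hom (Bs ++ [H]) Z) : M.Hom (As ++ [H]) Z :=
  cast (congrArg (M.Hom · Z) (M.sflat As [H]))
    (M.comp (appendFam fs (.cons (M.ident H) .nil)) g)

end Multicategory

/-- The image of a family of multimorphisms under a multifunctor. -/
def mapFam {M N : Multicategory.{u, v}} (obj : M.Obj → N.Obj)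
    (map : ∀ {Xs Y}, M.Hom Xs Y → N.Hom (Xs.map obj) (obj Y)) :
    ∀ {Xss Ys}, HomFam M.Obj M.Hom Xss Ys →
      HomFam N.Obj N.Hom (Xss.map (List.map obj)) (Ys.map obj)
  | _, _, .nil => .nil
  | _, _, .cons f fs => .cons (map f) (mapFam obj @map fs)

/-- A multifunctor between multicategories. -/
structure Multifunctor (M N : Multicategory.{u, v}) : Type (max u v) where
  obj : M.Obj → N.Obj
  map : ∀ {Xs Y}, M.Hom Xs Y → N.Hom (Xs.map obj) (obj Y)
  map_ident : ∀ X, map (M.ident X) = N.ident (obj X)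
  map_comp : ∀ {Xss Ys Z} (fs : HomFam M.Obj M.Hom Xss Ys) (g : M.Hom Ys Z),
    HEq (map (M.comp fs g)) (N.comp (mapFam obj @map fs) (map g))

/-- A closed multicategory : a multicategory together with internal hom objects
and evaluation morphisms such that `φ : f ↦ (1,…,1,f)·ev` is a bijection. -/
structure ClosedMulticategory extends Multicategory.{u, v} where
  ihom : List Obj → Obj → Obj
  ev : ∀ (Xs : List Obj) (Z : Obj), Hom (Xs ++ [ihom Xs Z]) Z
  closed : ∀ (Xs Ys : List Obj) (Z : Obj),
    Function.Bijective
      (fun f : Hom Ys (ihom Xs Z) => toMulticategory.plug f (ev Xs Z))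

namespace ClosedMulticategory

variable (C : ClosedMulticategory.{u, v})

/-- The inverse of the bijection `φ` : currying. -/
noncomputable def curry {Xs Ys : List C.Obj} {Z : C.Obj}
    (f : C.Hom (Xs ++ Ys) Z) : C.Hom Ys (C.ihom Xs Z) :=
  (Equiv.ofBijective _ (C.closed Xs Ys Z)).symm f

/-- The covariant action `C̲(W₁,…,Wₘ; h)` of a unary morphism `h` on internal
homs, defined by `(1,…,1,C̲(Ws;h)) · ev_{Ws;B} = ev_{Ws;A} · h`. -/
noncomputable def homCovM (Ws : List C.Obj) {A B : C.Obj} (h : C.Hom [A] B) :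
    C.Hom [C.ihom Ws A] (C.ihom Ws B) :=
  C.curry (Xs := Ws) (C.toMulticategory.postcomp (C.ev Ws A) h)

/-- The contravariant action `C̲(h; Z)` of a unary morphism `h : A → B` on
internal homs, defined by `(1,C̲(h;Z)) · ev_{A;Z} = (h,1) · ev_{B;Z}`. -/
noncomputable def homContra {A B : C.Obj} (h : C.Hom [A] B) (Z : C.Obj) :
    C.Hom [C.ihom [B] Z] (C.ihom [A] Z) :=
  C.curry (Xs := [A]) (C.toMulticategory.plugFirst h (C.ev [B] Z))

/-- The contravariant action `C̲(f₁,…,fₘ; Z)` of a family of unary morphisms on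
internal homs. -/
noncomputable def homContraM {As Bs : List C.Obj}
    (fs : HomFam C.Obj C.Hom (As.map fun a => [a]) Bs) (Z : C.Obj) :
    C.Hom [C.ihom Bs Z] (C.ihom As Z) :=
  C.curry (Xs := As) (C.toMulticategory.sideComp fs (C.ev Bs Z))

/-- Composition `μ` of the `C`-category `C̲`, determined by
`(1_X, μ)·ev_{X;Z} = (ev_{X;Y},1)·ev_{Y;Z}`. -/
noncomputable def mu (X Y Z : C.Obj) :
    C.Hom [C.ihom [X] Y, C.ihom [Y] Z] (C.ihom [X] Z) :=
  C.curry (Xs := [X])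
    (C.toMulticategory.plugFirst (Xs := [X, C.ihom [X] Y]) (Γ := [C.ihom [Y] Z])
      (C.ev [X] Y) (C.ev [Y] Z))

/-- The identity `⟨1_X⟩ : () → C̲(X;X)` of the `C`-category `C̲`. -/
noncomputable def oneHom (X : C.Obj) : C.Hom [] (C.ihom [X] X) :=
  C.curry (Xs := [X]) (Ys := []) (C.ident X)

/-- The morphism `L^X_{YZ} : C̲(Y;Z) → C̲(C̲(X;Y);C̲(X;Z))`, uniquely determined
by `(1, L^X_{YZ}) · ev = μ`. -/
noncomputable def Lhat (X Y Z : C.Obj) :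
    C.Hom [C.ihom [Y] Z] (C.ihom [C.ihom [X] Y] (C.ihom [X] Z)) :=
  C.curry (Xs := [C.ihom [X] Y]) (C.mu X Y Z)

/-- The action `C̲(u;1) : C̲(1;X) → C̲(;X) = X` of a nullary morphism `u`. -/
def uAct {one : C.Obj} (u : C.Hom [] one) (X : C.Obj) :
    C.Hom [C.ihom [one] X] X :=
  C.toMulticategory.plugFirst u (C.ev [one] X)

/-- `(one, u)` is a unit object of the closed multicategory `C` if all the
morphisms `C̲(u;1) : C̲(1;X) → X` are invertible. -/
def IsUnitObj (one : C.Obj) (u : C.Hom [] one) : Prop :=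
  ∀ X : C.Obj, ∃ inv : C.Hom [X] (C.ihom [one] X),
    C.toMulticategory.comp1 (C.uAct u X) inv = C.ident (C.ihom [one] X) ∧
    C.toMulticategory.comp1 inv (C.uAct u X) = C.ident X

end ClosedMulticategory

/-- The closing transformation `F̲_{Xs;Z} : F C̲(Xs;Z) → D̲(F Xs; FZ)` of a
multifunctor between closed multicategories, i.e. the unique morphism with
`(1,…,1,F̲) · ev^D = F(ev^C)`. -/
noncomputable def closingTrans {C D : ClosedMulticategory.{u, v}}
    (F : Multifunctor C.toMulticategory D.toMulticategory)
    (Xs : List C.Obj) (Z : C.Obj) :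
    D.Hom [F.obj (C.ihom Xs Z)] (D.ihom (Xs.map F.obj) (F.obj Z)) :=
  D.curry (Xs := Xs.map F.obj)
    (cast (congrArg (D.Hom · (F.obj Z)) (List.map_append :
        (Xs ++ [C.ihom Xs Z]).map F.obj = Xs.map F.obj ++ [C.ihom Xs Z].map F.obj))
      (F.map (C.ev Xs Z)))

/-!
Maps into `C̲(W;Z)` are determined by their composite with `ev_{W;Z}` (closedness). Using
the defining equations of `C̲(f;-)` and `C̲(-;g)` together with associativity, both sides of the
interchange law transpose to `(f,1) · (ev_{X;Y} · g)`.
-/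

namespace Multicategory

variable (M : Multicategory.{u, v})

theorem comp_single_ident {A Y : M.Obj} (f : M.Hom [A] Y) :
    M.comp (.cons f .nil) (M.ident Y) = f :=
  eq_of_heq (M.comp_id f)

theorem comp_ident_single {A B : M.Obj} (f : M.Hom [A] B) :
    M.comp (.cons (M.ident A) .nil) f = f :=
  eq_of_heq (M.id_comp f)

theorem comp1_eq {X Y Z : M.Obj} (f : M.Hom [X] Y) (g : M.Hom [Y] Z) :
    M.comp1 f g = M.comp (.cons f .nil) g :=
  rfl

theorem comp_pair_comp_single {A₀ B₀ A B Cc D : M.Obj}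
    (x : M.Hom [A₀] A) (y : M.Hom [B₀] B) (e : M.Hom [A, B] Cc) (g : M.Hom [Cc] D) :
    M.comp (.cons (M.comp (.cons x (.cons y .nil)) e) .nil) g
      = M.comp (.cons x (.cons y .nil)) (M.comp (.cons e .nil) g) :=
  eq_of_heq (M.assoc (.cons (.cons x (.cons y .nil)) .nil) (.cons e .nil) g)

theorem comp_pair_comp_pair {A₀ B₀ A B A' B' D : M.Obj}
    (x : M.Hom [A₀] A) (y : M.Hom [B₀] B) (p : M.Hom [A] A') (q : M.Hom [B] B')
    (h : M.Hom [A', B'] D) :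
    M.comp (.cons x (.cons y .nil)) (M.comp (.cons p (.cons q .nil)) h)
      = M.comp (.cons (M.comp (.cons x .nil) p) (.cons (M.comp (.cons y .nil) q) .nil)) h :=
  (eq_of_heq (M.assoc (.cons (.cons x .nil) (.cons (.cons y .nil) .nil))
    (.cons p (.cons q .nil)) h)).symm

theorem comp_pair_comp_ident_pair {A₀ B₀ A B B' D : M.Obj}
    (x : M.Hom [A₀] A) (y : M.Hom [B₀] B) (q : M.Hom [B] B') (h : M.Hom [A, B'] D) :
    M.comp (.cons x (.cons y .nil)) (M.comp (.cons (M.ident A) (.cons q .nil)) h)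
      = M.comp (.cons x (.cons (M.comp (.cons y .nil) q) .nil)) h := by
  rw [comp_pair_comp_pair, comp_single_ident]

theorem comp_pair_comp_pair_ident {A₀ B₀ A B A' D : M.Obj}
    (x : M.Hom [A₀] A) (y : M.Hom [B₀] B) (p : M.Hom [A] A') (h : M.Hom [A', B] D) :
    M.comp (.cons x (.cons y .nil)) (M.comp (.cons p (.cons (M.ident B) .nil)) h)
      = M.comp (.cons (M.comp (.cons x .nil) p) (.cons y .nil)) h := by
  rw [comp_pair_comp_pair, comp_single_ident]

end Multicategory

namespace ClosedMulticategory

open Multicategory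

variable (C : ClosedMulticategory.{u, v})

theorem plug_curry {Xs Ys : List C.Obj} {Z : C.Obj} (h : C.Hom (Xs ++ Ys) Z) :
    C.toMulticategory.plug (C.curry h) (C.ev Xs Z) = h :=
  (Equiv.ofBijective _ (C.closed Xs Ys Z)).apply_symm_apply h

theorem hom_ext_unary {W Z Γ : C.Obj} {u v : C.Hom [Γ] (C.ihom [W] Z)}
    (h : C.comp (.cons (C.ident W) (.cons u .nil)) (C.ev [W] Z)
      = C.comp (.cons (C.ident W) (.cons v .nil)) (C.ev [W] Z)) : u = v :=
  (C.closed [W] [Γ] Z).injective h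

theorem comp_ident_homCovM_ev (W : C.Obj) {A B : C.Obj} (g : C.Hom [A] B) :
    C.comp (.cons (C.ident W) (.cons (C.homCovM [W] g) .nil)) (C.ev [W] B)
      = C.comp (.cons (C.ev [W] A) .nil) g :=
  C.plug_curry (Xs := [W]) (Ys := [C.ihom [W] A]) (Z := B) _

theorem comp_ident_homContra_ev {A B : C.Obj} (f : C.Hom [A] B) (Z : C.Obj) :
    C.comp (.cons (C.ident A) (.cons (C.homContra f Z) .nil)) (C.ev [A] Z)
      = C.comp (.cons f (.cons (C.ident (C.ihom [B] Z)) .nil)) (C.ev [B] Z) :=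
  C.plug_curry (Xs := [A]) (Ys := [C.ihom [B] Z]) (Z := Z) _

theorem comp_ident_homContra_homCovM_ev {W X Y Z : C.Obj} (f : C.Hom [W] X)
    (g : C.Hom [Y] Z) :
    C.comp (.cons (C.ident W)
        (.cons (C.comp (.cons (C.homContra f Y) .nil) (C.homCovM [W] g)) .nil)) (C.ev [W] Z)
      = C.comp (.cons f (.cons (C.ident (C.ihom [X] Y)) .nil))
          (C.comp (.cons (C.ev [X] Y) .nil) g) := by
  rw [← comp_pair_comp_ident_pair, comp_ident_homCovM_ev, ← comp_pair_comp_single,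
    comp_ident_homContra_ev, comp_pair_comp_single]

theorem comp_ident_homCovM_homContra_ev {W X Y Z : C.Obj} (f : C.Hom [W] X)
    (g : C.Hom [Y] Z) :
    C.comp (.cons (C.ident W)
        (.cons (C.comp (.cons (C.homCovM [X] g) .nil) (C.homContra f Z)) .nil)) (C.ev [W] Z)
      = C.comp (.cons f (.cons (C.ident (C.ihom [X] Y)) .nil))
          (C.comp (.cons (C.ev [X] Y) .nil) g) := by
  rw [← comp_pair_comp_ident_pair, comp_ident_homContra_ev, comp_pair_comp_pair_ident,
    comp_ident_single, ← comp_ident_homCovM_ev, comp_pair_comp_ident_pair,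
    comp_ident_single]

end ClosedMulticategory

open ClosedMulticategory in
/-- In a closed multicategory `C`, for `f : W → X` and
`g : Y → Z` the interchange law
`C̲(f;Y) · C̲(W;g) = C̲(X;g) · C̲(f;Z) : C̲(X;Y) → C̲(W;Z)` holds (so that
`(X,Y) ↦ C̲(X;Y)` extends to a functor `C^op × C → C` on the underlying
category of `C`). -/
theorem homContra_homCov_interchange (C : ClosedMulticategory.{u, v})
    {W X Y Z : C.Obj} (f : C.Hom [W] X) (g : C.Hom [Y] Z) :
    C.toMulticategory.comp1 (C.homContra f Y) (C.homCovM [W] g)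
      = C.toMulticategory.comp1 (C.homCovM [X] g) (C.homContra f Z) := by
  apply C.hom_ext_unary
  rw [Multicategory.comp1_eq, Multicategory.comp1_eq, comp_ident_homContra_homCovM_ev,
    comp_ident_homCovM_homContra_ev]
end

section
/- Let F : C → D be a multifunctor between closed multicategories. Then the diagram commutes: for all objects X₁,…,Xₘ,Y₁,…,Yₙ,Z, applying F to a morphism g : Y₁,…,Yₙ → C̲(X₁,…,Xₘ;Z), postcomposing with the closing transformation F̲_{X₁,…,Xₘ;Z}, and then applying φ^D equals φ^C followed by F; i.e. F(φ^C(g)) = φ^D(F(g) · F̲). -/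
universe u v

variable {Obj : Type u} {Hom : List Obj → Obj → Type v}

/-! Since `F` preserves composition, `F((1,…,1,g)·ev^C) = (1,…,1,Fg)·F(ev^C)`, and
`F(ev^C) = (1,…,1,F̲)·ev^D` is the defining property of `F̲`. Associativity of plugging
into the last argument regroups `(1,…,1,Fg)·((1,…,1,F̲)·ev^D)` as `(1,…,1,(Fg)·F̲)·ev^D`. -/

@[simp]
theorem List.flatten_map_singleton {α β : Type*} (f : α → β) (xs : List α) :
    (xs.map fun x => [f x]).flatten = xs.map f := by
  induction xs <;> simp_all

theorem HomFam.cons_congr_heq {Obj : Type u} {Hom : List Obj → Obj → Type v}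
    {Xs Xs' : List Obj} {Y Y' : Obj} {Xss Xss' : List (List Obj)} {Ys Ys' : List Obj}
    (hXs : Xs = Xs') (hY : Y = Y') (hXss : Xss = Xss') (hYs : Ys = Ys')
    {f : Hom Xs Y} {f' : Hom Xs' Y'} {fs : HomFam Obj Hom Xss Ys}
    {fs' : HomFam Obj Hom Xss' Ys'} (hf : HEq f f') (hfs : HEq fs fs') :
    HEq (HomFam.cons f fs) (HomFam.cons f' fs') := by
  subst hXs hY hXss hYs hf hfs
  rfl

namespace Multicategory

variable (M : Multicategory.{u, v})

theorem comp_congr_heq {Xss Xss' : List (List M.Obj)} {Ys Ys' : List M.Obj} {Z : M.Obj}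
    (hXss : Xss = Xss') (hYs : Ys = Ys')
    {fs : HomFam M.Obj M.Hom Xss Ys} {fs' : HomFam M.Obj M.Hom Xss' Ys'}
    {g : M.Hom Ys Z} {g' : M.Hom Ys' Z} (hfs : HEq fs fs') (hg : HEq g g') :
    HEq (M.comp fs g) (M.comp fs' g') := by
  subst hXss hYs hfs hg
  rfl

theorem plug_heq_comp {Xs Ys : List M.Obj} {H Z : M.Obj} (f : M.Hom Ys H)
    (g : M.Hom (Xs ++ [H]) Z) :
    HEq (M.plug f g) (M.comp (appendFam (idFam M.ident Xs) (.cons f .nil)) g) :=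
  cast_heq _ _

/-- `((1_{X₁}), …, (1_{Xₘ}), (f))`: the family of families through which associativity
regroups `(1,…,1,f)` followed by `(1,…,1,h)`. -/
def plugFamFam {Ys : List M.Obj} {H : M.Obj} (f : M.Hom Ys H) :
    ∀ Xs : List M.Obj, FamFam M.Obj M.Hom ((Xs.map fun x => [[x]]) ++ [[Ys]])
      ((Xs.map fun x => [x]) ++ [[H]])
  | [] => .cons (.cons f .nil) .nil
  | x :: xs => .cons (.cons (M.ident x) .nil) (plugFamFam f xs)

theorem flattenFam_plugFamFam {Ys : List M.Obj} {H : M.Obj} (f : M.Hom Ys H) :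
    ∀ Xs : List M.Obj,
      HEq (flattenFam (M.plugFamFam f Xs)) (appendFam (idFam M.ident Xs) (.cons f .nil))
  | [] => HEq.rfl
  | x :: xs => by
    simp only [plugFamFam, flattenFam, appendFam, idFam]
    exact HomFam.cons_congr_heq rfl rfl (by simp) (by simp) HEq.rfl
      (flattenFam_plugFamFam f xs)

theorem zipComp_plugFamFam {Ys : List M.Obj} {H' H : M.Obj} (f : M.Hom Ys H')
    (h : M.Hom [H'] H) :
    ∀ Xs : List M.Obj,
      HEq (zipComp (fun fs g => M.comp fs g) (M.plugFamFam f Xs)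
          (appendFam (idFam M.ident Xs) (.cons h .nil)))
        (appendFam (idFam M.ident Xs) (.cons (M.postcomp f h) .nil))
  | [] => HomFam.cons_congr_heq (by simp) rfl rfl rfl (cast_heq _ _).symm HEq.rfl
  | x :: xs => by
    simp only [plugFamFam, idFam, appendFam, zipComp]
    exact HomFam.cons_congr_heq rfl rfl (by simp [Function.comp_def])
      rfl (M.comp_id (M.ident x)) (zipComp_plugFamFam f h xs)

theorem plug_postcomp {Xs Ys : List M.Obj} {H' H Z : M.Obj} (f : M.Hom Ys H')
    (h : M.Hom [H'] H) (e : M.Hom (Xs ++ [H]) Z) :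
    M.plug (M.postcomp f h) e = M.plug f (M.plug h e) := by
  have lhs : HEq (M.plug (M.postcomp f h) e)
      (M.comp (zipComp (fun fs g => M.comp fs g) (M.plugFamFam f Xs)
        (appendFam (idFam M.ident Xs) (.cons h .nil))) e) :=
    (M.plug_heq_comp _ _).trans <|
      M.comp_congr_heq (by simp) rfl (M.zipComp_plugFamFam f h Xs).symm HEq.rfl
  have rhs : HEq (M.comp (flattenFam (M.plugFamFam f Xs))
        (M.comp (appendFam (idFam M.ident Xs) (.cons h .nil)) e))
      (M.plug f (M.plug h e)) :=
    (M.comp_congr_heq (by simp) (by simp) (M.flattenFam_plugFamFam f Xs)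
      (M.plug_heq_comp _ _).symm).trans (M.plug_heq_comp _ _).symm
  exact eq_of_heq ((lhs.trans (M.assoc _ _ e)).trans rhs)

end Multicategory

namespace Multifunctor

variable {M N : Multicategory.{u, v}} (F : Multifunctor M N)

theorem map_congr_heq {Xs Xs' : List M.Obj} {Y : M.Obj} (hXs : Xs = Xs')
    {a : M.Hom Xs Y} {b : M.Hom Xs' Y} (hab : HEq a b) : HEq (F.map a) (F.map b) := by
  subst hXs hab
  rfl

theorem mapFam_appendFam_idFam {Yss : List (List M.Obj)} {Ws : List M.Obj}
    (gs : HomFam M.Obj M.Hom Yss Ws) :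
    ∀ Xs : List M.Obj,
      HEq (mapFam F.obj F.map (appendFam (idFam M.ident Xs) gs))
        (appendFam (idFam N.ident (Xs.map F.obj)) (mapFam F.obj F.map gs))
  | [] => HEq.rfl
  | x :: xs => by
    simp only [idFam, appendFam, mapFam]
    exact HomFam.cons_congr_heq rfl rfl (by simp) (by simp) (by rw [F.map_ident])
      (mapFam_appendFam_idFam gs xs)

theorem map_plug {Xs Ys : List M.Obj} {H Z : M.Obj} (g : M.Hom Ys H)
    (e : M.Hom (Xs ++ [H]) Z) :
    HEq (F.map (M.plug g e))
      (N.plug (Xs := Xs.map F.obj) (F.map g)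
        (cast (congrArg (N.Hom · (F.obj Z)) List.map_append) (F.map e))) := by
  have image_of_comp :
      HEq (N.comp (mapFam F.obj F.map (appendFam (idFam M.ident Xs) (.cons g .nil))) (F.map e))
        (N.plug (Xs := Xs.map F.obj) (F.map g)
          (cast (congrArg (N.Hom · (F.obj Z)) List.map_append) (F.map e))) :=
    (N.comp_congr_heq (by simp) (by simp) (F.mapFam_appendFam_idFam _ Xs)
      (cast_heq _ _).symm).trans (N.plug_heq_comp _ _).symm
  exact ((F.map_congr_heq (M.sflat Xs Ys).symm (M.plug_heq_comp g e)).trans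
    (F.map_comp _ e)).trans image_of_comp

end Multifunctor

theorem ClosedMulticategory.plug_curry_s13 (C : ClosedMulticategory.{u, v}) {Xs Ys : List C.Obj}
    {Z : C.Obj} (f : C.Hom (Xs ++ Ys) Z) :
    C.toMulticategory.plug (C.curry f) (C.ev Xs Z) = f :=
  (Equiv.ofBijective _ (C.closed Xs Ys Z)).apply_symm_apply f

theorem plug_closingTrans {C D : ClosedMulticategory.{u, v}}
    (F : Multifunctor C.toMulticategory D.toMulticategory) (Xs : List C.Obj) (Z : C.Obj) :
    D.toMulticategory.plug (closingTrans F Xs Z) (D.ev (Xs.map F.obj) (F.obj Z)) =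
      cast (congrArg (D.Hom · (F.obj Z)) List.map_append) (F.map (C.ev Xs Z)) :=
  D.plug_curry_s13 _

/-- Let `F : C → D` be a multifunctor between closed
multicategories. For every `g : Y₁,…,Yₙ → C̲(X₁,…,Xₘ;Z)`,
`F(φ^C(g)) = φ^D(F(g) · F̲)` where `F̲` is the closing transformation and
`φ^C, φ^D` are the closedness bijections `f ↦ (1,…,1,f)·ev`. -/
theorem map_phi (C D : ClosedMulticategory.{u, v})
    (F : Multifunctor C.toMulticategory D.toMulticategory)
    (Xs Ys : List C.Obj) (Z : C.Obj) (g : C.Hom Ys (C.ihom Xs Z)) :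
    HEq (F.map (C.toMulticategory.plug (Xs := Xs) g (C.ev Xs Z)))
      (D.toMulticategory.plug (Xs := Xs.map F.obj)
        (D.toMulticategory.postcomp (F.map g) (closingTrans F Xs Z))
        (D.ev (Xs.map F.obj) (F.obj Z))) := by
  rw [Multicategory.plug_postcomp, plug_closingTrans]
  exact F.map_plug g (C.ev Xs Z)
end
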